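/- arXiv:2204.08008 — 7 statements merged into one kernel-verified Lean document; each statement's English description precedes it below -/
import Mathlib

section
/- Let G be a profinite group (a compact, Hausdorff, totally disconnected topological group), Q a finite group, J a closed subgroup of G, and 𝓘 a closed subset of G. Suppose there exists a continuous surjective group homomorphism ρ_J : J → Q such that every element of 𝓘 ∩ J lies in the kernel of ρ_J. Then there exist an open subgroup H of G containing J and a continuous surjective group homomorphism ρ_H : H → Q such that every element of 𝓘 ∩ H lies in the kernel of ρ_H and the restriction of ρ_H to J coincides with ρ_J. -/
/-!
Since `Q` is discrete, `ker ρ_J` is open in `J`, and its complement `K` in `J` is compact and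
disjoint from the closed set `I`. A small enough open normal subgroup `U` of `G` therefore satisfies
`U ∩ J ≤ ker ρ_J` and `K U ∩ I = ∅`. Then `ρ_J` factors through `J / (J ∩ U) ≃ J U / U`, which
defines `ρ_H` on the open subgroup `H = J U`, and `ρ_H` kills `I ∩ H` because `I ∩ J U ⊆ (ker ρ_J) U`.
-/

theorem Subgroup.exists_monoidHom_sup_normal_extend {G Q : Type*} [Group G] [Group Q]
    (J N : Subgroup G) [N.Normal] (φ : J →* Q) (hφ : N.subgroupOf J ≤ φ.ker) :
    ∃ ψ : (J ⊔ N : Subgroup G) →* Q,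
      ψ.comp (inclusion le_sup_left) = φ ∧ N.subgroupOf (J ⊔ N) ≤ ψ.ker := by
  let e := QuotientGroup.quotientInfEquivProdNormalQuotient J N
  refine ⟨(QuotientGroup.lift _ φ hφ).comp
    (e.symm.toMonoidHom.comp (QuotientGroup.mk' (N.subgroupOf (J ⊔ N)))), ?_, ?_⟩
  · ext j
    have he : e.symm (inclusion le_sup_left j : (J ⊔ N : Subgroup G)) =
        (j : J ⧸ N.subgroupOf J) :=
      e.symm_apply_eq.2 rfl
    simp [he]
  · intro n hn
    simp [(QuotientGroup.eq_one_iff _).2 hn]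

theorem MonoidHom.continuous_of_isOpen_ker {G Q : Type*} [Group G] [TopologicalSpace G]
    [IsTopologicalGroup G] [Group Q] [TopologicalSpace Q] [DiscreteTopology Q] (f : G →* Q)
    (hf : IsOpen (f.ker : Set G)) : Continuous f :=
  continuous_of_continuousAt_one f <| by
    rw [ContinuousAt, map_one, nhds_discrete Q, Filter.tendsto_pure]
    exact hf.mem_nhds (one_mem _)

section

variable {G Q : Type*} [Group G] [TopologicalSpace G] [Group Q] [TopologicalSpace Q]
  [DiscreteTopology Q]

theorem Subgroup.exists_isOpen_one_mem_subset_ker {J : Subgroup G} {ρ : J →* Q}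
    (hρ : Continuous ρ) :
    ∃ V : Set G, IsOpen V ∧ (1 : G) ∈ V ∧ ∀ (g : G) (hg : g ∈ J), g ∈ V → ρ ⟨g, hg⟩ = 1 := by
  obtain ⟨V, hV, hVker⟩ := isOpen_induced_iff.1 ((isOpen_discrete {1}).preimage hρ)
  have hmem : ∀ g : J, (g : G) ∈ V ↔ ρ g = 1 := fun g => Set.ext_iff.1 hVker g
  exact ⟨V, hV, (hmem 1).2 (map_one ρ), fun g hg hgV => (hmem ⟨g, hg⟩).1 hgV⟩

theorem ProfiniteGrp.exists_openNormalSubgroup_le_ker_and_kills_mul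
    [IsTopologicalGroup G] [CompactSpace G] [TotallyDisconnectedSpace G]
    {J : Subgroup G} (hJ : IsClosed (J : Set G)) {I : Set G} (hI : IsClosed I) {ρ : J →* Q}
    (hρ : Continuous ρ) (hρI : ∀ (g : G) (hg : g ∈ J), g ∈ I → ρ ⟨g, hg⟩ = 1) :
    ∃ U : OpenNormalSubgroup G, U.toSubgroup.subgroupOf J ≤ ρ.ker ∧
      ∀ (j : J), ∀ u ∈ U, (j : G) * u ∈ I → ρ j = 1 := by
  obtain ⟨V, hV, h1V, hVker⟩ := J.exists_isOpen_one_mem_subset_ker hρ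
  have : CompactSpace J := isCompact_iff_compactSpace.1 hJ.isCompact
  set K : Set G := Subtype.val '' {j : J | ρ j ≠ 1}
  have hK : IsCompact K :=
    ((isClosed_discrete {1}ᶜ).preimage hρ).isCompact.image continuous_subtype_val
  have hKI : K ⊆ Iᶜ := by
    rintro _ ⟨j, hj, rfl⟩ hjI
    exact hj (hρI j j.2 hjI)
  obtain ⟨W, hW, hKW⟩ := compact_open_separated_mul_right hK hI.isOpen_compl hKI
  obtain ⟨U, hU⟩ := exist_openNormalSubgroup_sub_open_nhds_of_one
    (hV.inter isOpen_interior) ⟨h1V, mem_interior_iff_mem_nhds.2 hW⟩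
  refine ⟨U, fun j hj => hVker _ j.2 (hU hj).1, fun j u hu hjuI => ?_⟩
  by_contra hj
  exact hKW (Set.mul_mem_mul ⟨j, hj, rfl⟩ (interior_subset (hU hu).2)) hjuI

end

theorem stmt_3_general (G : Type*) [Group G] [TopologicalSpace G] [IsTopologicalGroup G]
    [CompactSpace G] [TotallyDisconnectedSpace G]
    (Q : Type*) [Group Q] [TopologicalSpace Q] [DiscreteTopology Q]
    (J : Subgroup G) (hJ : IsClosed (J : Set G))
    (I : Set G) (hI : IsClosed I)
    (ρJ : J →* Q) (hcJ : Continuous ρJ) (hsJ : Function.Surjective ρJ)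
    (hkerJ : ∀ (g : G) (hg : g ∈ J), g ∈ I → ρJ ⟨g, hg⟩ = 1) :
    ∃ (H : Subgroup G) (hJH : J ≤ H), IsOpen (H : Set G) ∧
      ∃ ρH : H →* Q, Continuous ρH ∧ Function.Surjective ρH ∧
        (∀ (g : G) (hg : g ∈ H), g ∈ I → ρH ⟨g, hg⟩ = 1) ∧
        (∀ (g : G) (hg : g ∈ J), ρH ⟨g, hJH hg⟩ = ρJ ⟨g, hg⟩) := by
  obtain ⟨U, hUker, hUI⟩ :=
    ProfiniteGrp.exists_openNormalSubgroup_le_ker_and_kills_mul hJ hI hcJ hkerJ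
  obtain ⟨ρH, hρHJ, hρHU⟩ := J.exists_monoidHom_sup_normal_extend U.toSubgroup ρJ hUker
  have hρH : ∀ (g : G) (hg : g ∈ J), ρH ⟨g, Subgroup.mem_sup_left hg⟩ = ρJ ⟨g, hg⟩ :=
    fun g hg => DFunLike.congr_fun hρHJ ⟨g, hg⟩
  refine ⟨J ⊔ U.toSubgroup, le_sup_left, Subgroup.isOpen_mono le_sup_right U.isOpen, ρH,
    ρH.continuous_of_isOpen_ker ?_, ?_, ?_, hρH⟩
  · exact Subgroup.isOpen_mono hρHU (U.isOpen.preimage continuous_subtype_val)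
  · refine Function.Surjective.of_comp (g := Subgroup.inclusion le_sup_left) ?_
    rw [← MonoidHom.coe_comp, hρHJ]
    exact hsJ
  · intro g hg hgI
    obtain ⟨j, hj, u, hu, rfl⟩ := Subgroup.mem_sup_of_normal_right.1 hg
    have hsplit : (⟨j * u, hg⟩ : (J ⊔ U.toSubgroup : Subgroup G)) =
        ⟨j, Subgroup.mem_sup_left hj⟩ * ⟨u, Subgroup.mem_sup_right hu⟩ := rfl
    rw [hsplit, map_mul, hρH j hj, hρHU hu, mul_one]
    exact hUI ⟨j, hj⟩ u hu hgI

/-- Let `G` be a profinite group, `Q` a finite (discrete) group, `J` a closed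
subgroup of `G` and `𝓘` a closed subset of `G`.  If there is a continuous surjection
`ρ_J : J ↠ Q` killing `𝓘 ∩ J`, then there are an open subgroup `H ⊇ J` of `G` and a continuous
surjection `ρ_H : H ↠ Q` killing `𝓘 ∩ H` and restricting to `ρ_J` on `J`. -/
theorem stmt_3 (G : Type*) [Group G] [TopologicalSpace G] [IsTopologicalGroup G]
    [CompactSpace G] [T2Space G] [TotallyDisconnectedSpace G]
    (Q : Type*) [Group Q] [Finite Q] [TopologicalSpace Q] [DiscreteTopology Q]
    (J : Subgroup G) (hJ : IsClosed (J : Set G))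
    (I : Set G) (hI : IsClosed I)
    (ρJ : J →* Q) (hcJ : Continuous ρJ) (hsJ : Function.Surjective ρJ)
    (hkerJ : ∀ (g : G) (hg : g ∈ J), g ∈ I → ρJ ⟨g, hg⟩ = 1) :
    ∃ (H : Subgroup G) (hJH : J ≤ H), IsOpen (H : Set G) ∧
      ∃ ρH : H →* Q, Continuous ρH ∧ Function.Surjective ρH ∧
        (∀ (g : G) (hg : g ∈ H), g ∈ I → ρH ⟨g, hg⟩ = 1) ∧
        (∀ (g : G) (hg : g ∈ J), ρH ⟨g, hJH hg⟩ = ρJ ⟨g, hg⟩) :=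
  stmt_3_general G Q J hJ I hI ρJ hcJ hsJ hkerJ
end

section
/- Let k be a field of characteristic 0 that is finitely generated as a field extension of ℚ, and let λ₁, λ₂ ∈ k with λ₁, λ₂ ∉ {0, 1}. If the cyclic subgroup of k^× generated by λ₁ equals the cyclic subgroup generated by λ₂, and the cyclic subgroup generated by 1−λ₁ equals the cyclic subgroup generated by 1−λ₂, then either λ₁ = λ₂, or λ₁ is a primitive 6th root of unity (equivalently λ₁² − λ₁ + 1 = 0) and λ₂ = λ₁⁻¹. -/
/-!
If `λ` has infinite order, the only generators of `⟨λ⟩` are `λ` and `λ⁻¹`. If both `λ₁` and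
`1 - λ₁` are roots of unity, a complex root `z` of the minimal polynomial of `λ₁` over `ℚ`
satisfies `|z| = |1 - z| = 1`, which forces `z² - z + 1 = 0`; so `λ₁` is a primitive sixth root
of unity, and again the only generators of `⟨λ₁⟩` are `λ₁^{±1}`. In the mixed cases,
`λ₂ = λ₁⁻¹` (resp. `1 - λ₂ = (1 - λ₁)⁻¹`) would make the infinite-order element among `λ₁`,
`1 - λ₁` a product of roots of unity.
-/

open Polynomial Subgroup ComplexConjugate

theorem Subgroup.isOfFinOrder_iff_of_zpowers_eq {G : Type*} [Group G] {x y : G}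
    (h : zpowers x = zpowers y) : IsOfFinOrder x ↔ IsOfFinOrder y := by
  rw [← orderOf_pos_iff, ← orderOf_pos_iff, ← Nat.card_zpowers, ← Nat.card_zpowers, h]

theorem Subgroup.eq_or_inv_eq_of_zpowers_eq_of_orderOf_eq_six {G : Type*} [Group G] {x y : G}
    (hx : orderOf x = 6) (h : zpowers x = zpowers y) : x = y ∨ x⁻¹ = y := by
  have hfin : IsOfFinOrder x := orderOf_pos_iff.1 (by omega)
  have hy : orderOf y = 6 := by rw [← Nat.card_zpowers, ← h, Nat.card_zpowers, hx]
  classical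
  obtain ⟨r, hr, rfl⟩ := Finset.mem_image.1 <|
    (hfin.mem_zpowers_iff_mem_range_orderOf).1 (h ▸ mem_zpowers y)
  rw [hx, Finset.mem_range] at hr
  rw [hfin.orderOf_pow, hx] at hy
  interval_cases r <;> norm_num at hy
  · exact Or.inl (pow_one x).symm
  · right
    refine inv_eq_of_mul_eq_one_right ?_
    rw [← pow_succ', show 5 + 1 = orderOf x by omega, pow_orderOf_eq_one]

section GroupWithZero

variable {G₀ : Type*} [GroupWithZero G₀] {a b : G₀}

theorem Units.zpowers_mk0_eq_of_setOf_zpow_eq (ha : a ≠ 0) (hb : b ≠ 0)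
    (h : {x | ∃ n : ℤ, x = a ^ n} = {x | ∃ n : ℤ, x = b ^ n}) :
    zpowers (Units.mk0 a ha) = zpowers (Units.mk0 b hb) := by
  ext u
  simpa [mem_zpowers_iff, Units.ext_iff, eq_comm] using Set.ext_iff.1 h u

theorem isOfFinOrder_iff_of_setOf_zpow_eq (ha : a ≠ 0) (hb : b ≠ 0)
    (h : {x | ∃ n : ℤ, x = a ^ n} = {x | ∃ n : ℤ, x = b ^ n}) :
    IsOfFinOrder a ↔ IsOfFinOrder b := by
  rw [← Units.val_mk0 ha, ← Units.val_mk0 hb, Units.isOfFinOrder_val, Units.isOfFinOrder_val]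
  exact isOfFinOrder_iff_of_zpowers_eq (Units.zpowers_mk0_eq_of_setOf_zpow_eq ha hb h)

theorem eq_or_inv_eq_of_setOf_zpow_eq (ha : a ≠ 0) (hb : b ≠ 0)
    (h : {x | ∃ n : ℤ, x = a ^ n} = {x | ∃ n : ℤ, x = b ^ n}) (hfin : ¬IsOfFinOrder a) :
    a = b ∨ a⁻¹ = b := by
  rw [← Units.val_mk0 ha, Units.isOfFinOrder_val] at hfin
  have := (zpowers_eq_zpowers_iff hfin).1 (Units.zpowers_mk0_eq_of_setOf_zpow_eq ha hb h)
  simpa [Units.ext_iff] using this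

theorem eq_or_inv_eq_of_setOf_zpow_eq_of_orderOf_eq_six (ha : a ≠ 0) (hb : b ≠ 0)
    (h : {x | ∃ n : ℤ, x = a ^ n} = {x | ∃ n : ℤ, x = b ^ n}) (h6 : orderOf a = 6) :
    a = b ∨ a⁻¹ = b := by
  rw [← Units.val_mk0 ha, orderOf_units] at h6
  have := eq_or_inv_eq_of_zpowers_eq_of_orderOf_eq_six h6
    (Units.zpowers_mk0_eq_of_setOf_zpow_eq ha hb h)
  simpa [Units.ext_iff] using this

end GroupWithZero

theorem Complex.sq_sub_self_add_one_eq_zero_of_norm_eq_one {z : ℂ} (h₁ : ‖z‖ = 1)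
    (h₂ : ‖1 - z‖ = 1) : z ^ 2 - z + 1 = 0 := by
  have hz : z * conj z = 1 := by
    rw [Complex.mul_conj, Complex.normSq_eq_norm_sq, h₁]; norm_num
  have hz' : (1 - z) * (1 - conj z) = 1 := by
    have := Complex.mul_conj (1 - z)
    rw [Complex.normSq_eq_norm_sq, h₂, map_sub, map_one] at this
    simpa using this
  linear_combination (z - 1) * hz - z * hz'

theorem IsIntegral.exists_aeval_eq_zero_iff {F K : Type*} (L : Type*) [Field F] [Field K] [Field L]
    [Algebra F K] [Algebra F L] [IsAlgClosed L] {x : K} (hx : IsIntegral F x) :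
    ∃ z : L, ∀ p : F[X], aeval z p = 0 ↔ aeval x p = 0 := by
  obtain ⟨z, hz⟩ := IsAlgClosed.exists_aeval_eq_zero L (minpoly F x) (minpoly.degree_pos hx).ne'
  have hmin : minpoly F z = minpoly F x :=
    (minpoly.eq_of_irreducible_of_monic (minpoly.irreducible hx) hz (minpoly.monic hx)).symm
  exact ⟨z, fun p ↦ by rw [← minpoly.dvd_iff, ← minpoly.dvd_iff, hmin]⟩

theorem sq_sub_self_add_one_eq_zero_of_isOfFinOrder {K : Type*} [Field K] [CharZero K] {ζ : K}
    (h₁ : IsOfFinOrder ζ) (h₂ : IsOfFinOrder (1 - ζ)) : ζ ^ 2 - ζ + 1 = 0 := by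
  obtain ⟨n, hn, hζn⟩ := h₁.exists_pow_eq_one
  obtain ⟨m, hm, hζm⟩ := h₂.exists_pow_eq_one
  have hint : IsIntegral ℚ ζ := ⟨X ^ n - C 1, monic_X_pow_sub_C 1 hn.ne', by simp [hζn]⟩
  obtain ⟨z, hz⟩ := hint.exists_aeval_eq_zero_iff ℂ
  have hzn : z ^ n = 1 := by
    have := (hz (X ^ n - 1)).2 (by simp [hζn])
    simpa [sub_eq_zero] using this
  have hzm : (1 - z) ^ m = 1 := by
    have := (hz ((1 - X) ^ m - 1)).2 (by simp [hζm])
    simpa [sub_eq_zero] using this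
  have hz₆ := Complex.sq_sub_self_add_one_eq_zero_of_norm_eq_one
    (Complex.norm_eq_one_of_pow_eq_one hzn hn.ne') (Complex.norm_eq_one_of_pow_eq_one hzm hm.ne')
  have := (hz (X ^ 2 - X + 1)).1 (by simpa using hz₆)
  simpa using this

theorem orderOf_eq_six_of_sq_sub_self_add_one_eq_zero {K : Type*} [Field K] [CharZero K] {ζ : K}
    (h : ζ ^ 2 - ζ + 1 = 0) : orderOf ζ = 6 := by
  have : IsPrimitiveRoot ζ 6 := by
    rw [← isRoot_cyclotomic_iff_charZero (by norm_num), cyclotomic_six]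
    simpa using h
  exact this.eq_orderOf.symm

theorem isOfFinOrder_of_mul_eq_one {K : Type*} [Field K] {x y : K} (hxy : x * y = 1)
    (hx : IsOfFinOrder (1 - x)) (hy : IsOfFinOrder (1 - y)) : IsOfFinOrder x := by
  have hy₁ : 1 - y ≠ 0 := hy.isUnit.ne_zero
  have hneg : IsOfFinOrder (-1 : K) := isOfFinOrder_iff_pow_eq_one.2 ⟨2, two_pos, by norm_num⟩
  have hinv : IsOfFinOrder (1 - y)⁻¹ := by
    obtain ⟨n, hn, h⟩ := hy.exists_pow_eq_one
    exact isOfFinOrder_iff_pow_eq_one.2 ⟨n, hn, by rw [inv_pow, h, inv_one]⟩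
  have hx' : x = -1 * (1 - x) * (1 - y)⁻¹ := by
    field_simp
    linear_combination -hxy
  rw [hx']
  exact (hneg.mul hx).mul hinv

theorem stmt_4_general (k : Type*) [Field k] [CharZero k]
    (lam1 lam2 : k) (h10 : lam1 ≠ 0) (h11 : lam1 ≠ 1) (h20 : lam2 ≠ 0) (h21 : lam2 ≠ 1)
    (hz : {x : k | ∃ n : ℤ, x = lam1 ^ n} = {x : k | ∃ n : ℤ, x = lam2 ^ n})
    (hz' : {x : k | ∃ n : ℤ, x = (1 - lam1) ^ n} = {x : k | ∃ n : ℤ, x = (1 - lam2) ^ n}) :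
    lam1 = lam2 ∨ (lam1 ^ 2 - lam1 + 1 = 0 ∧ lam2 = lam1⁻¹) := by
  have h1' : 1 - lam1 ≠ 0 := sub_ne_zero.2 h11.symm
  have h2' : 1 - lam2 ≠ 0 := sub_ne_zero.2 h21.symm
  by_cases hfin : IsOfFinOrder lam1
  · by_cases hfin' : IsOfFinOrder (1 - lam1)
    · have hq := sq_sub_self_add_one_eq_zero_of_isOfFinOrder hfin hfin'
      rcases eq_or_inv_eq_of_setOf_zpow_eq_of_orderOf_eq_six h10 h20 hz
        (orderOf_eq_six_of_sq_sub_self_add_one_eq_zero hq) with h | h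
      · exact Or.inl h
      · exact Or.inr ⟨hq, h.symm⟩
    · rcases eq_or_inv_eq_of_setOf_zpow_eq h1' h2' hz' hfin' with h | h
      · exact Or.inl (sub_right_injective h)
      · refine absurd (isOfFinOrder_of_mul_eq_one (h ▸ mul_inv_cancel₀ h1') ?_ ?_) hfin'
        · simpa using hfin
        · simpa using (isOfFinOrder_iff_of_setOf_zpow_eq h10 h20 hz).1 hfin
  · rcases eq_or_inv_eq_of_setOf_zpow_eq h10 h20 hz hfin with h | h
    · exact Or.inl h
    by_cases hfin' : IsOfFinOrder (1 - lam1)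
    · exact absurd (isOfFinOrder_of_mul_eq_one (h ▸ mul_inv_cancel₀ h10) hfin'
        ((isOfFinOrder_iff_of_setOf_zpow_eq h1' h2' hz').1 hfin')) hfin
    rcases eq_or_inv_eq_of_setOf_zpow_eq h1' h2' hz' hfin' with h' | h'
    · exact Or.inl (sub_right_injective h')
    · refine Or.inr ⟨?_, h.symm⟩
      rw [← h] at h'
      field_simp at h'
      linear_combination h'

/-- Let `k` be a field of characteristic `0`, finitely generated as a field
extension of `ℚ` (equivalently: generated over its prime field by a finite set), and let
`λ₁, λ₂ ∈ k ∖ {0,1}`.  If `⟨λ₁⟩ = ⟨λ₂⟩` and `⟨1−λ₁⟩ = ⟨1−λ₂⟩` in `kˣ`, then either `λ₁ = λ₂`,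
or `λ₁` is a primitive 6-th root of unity (equivalently `λ₁² − λ₁ + 1 = 0`) and `λ₂ = λ₁⁻¹`. -/
theorem stmt_4 (k : Type*) [Field k] [CharZero k]
    (hfg : ∃ S : Finset k, Subfield.closure (S : Set k) = ⊤)
    (lam1 lam2 : k) (h10 : lam1 ≠ 0) (h11 : lam1 ≠ 1) (h20 : lam2 ≠ 0) (h21 : lam2 ≠ 1)
    (hz : {x : k | ∃ n : ℤ, x = lam1 ^ n} = {x : k | ∃ n : ℤ, x = lam2 ^ n})
    (hz' : {x : k | ∃ n : ℤ, x = (1 - lam1) ^ n} = {x : k | ∃ n : ℤ, x = (1 - lam2) ^ n}) :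
    lam1 = lam2 ∨ (lam1 ^ 2 - lam1 + 1 = 0 ∧ lam2 = lam1⁻¹) :=
  stmt_4_general k lam1 lam2 h10 h11 h20 h21 hz hz'
end

section
/- Let p be a prime number and let k be a field of characteristic p that is finitely generated as a field extension of 𝔽_p, with a fixed algebraic closure k̄. Let λ₁, λ₂ ∈ k with λ₁, λ₂ ∉ {0, 1}, and assume λ₁ is transcendental over the prime field 𝔽_p. If ⟨λ₁⟩^perf = ⟨λ₂⟩^perf and ⟨1−λ₁⟩^perf = ⟨1−λ₂⟩^perf as subsets of k̄^×, then there exists a unique integer n such that λ₂ = λ₁^{pⁿ}, in the sense that λ₂^{p^b} = λ₁^{p^a} for all (equivalently, some) natural numbers a, b with a − b = n. -/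
/-!
Reading `⟨λ₁⟩^perf = ⟨λ₂⟩^perf` in both directions gives `λ₂ ^ p ^ m = λ₁ ^ n` and
`λ₁ ^ p ^ s = λ₂ ^ t`; as `λ₁` has infinite order, `n * t = p ^ (m + s)`, so `n = ± p ^ j`.
The sign `-` is impossible: after a further `p`-power Frobenius additivity turns `1 - λ₂` into
`1 - λ₁ ^ (-A)`, and the second hypothesis makes this an integral power of `1 - λ₁`, an algebraic
relation for `λ₁`. For `n = p ^ j` the exponent `j - m` works, and it is unique because
`λ₁ ^ p ^ a` determines `a`.
-/

open Function Polynomial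

namespace Transcendental

section CommRing

variable {R A : Type*} [CommRing R] [Nontrivial R] [CommRing A] [Algebra R A] {x : A}

theorem pow_injective (hx : Transcendental R x) : Injective (x ^ · : ℕ → A) := by
  intro a b hab
  have : (X ^ a : R[X]) = X ^ b := transcendental_iff_injective.mp hx (by simpa using hab)
  simpa using congrArg natDegree this

theorem not_isOfFinOrder (hx : Transcendental R x) : ¬IsOfFinOrder x := by
  rw [isOfFinOrder_iff_pow_eq_one]
  rintro ⟨n, hn, hxn⟩
  exact hn.ne' (hx.pow_injective (by simpa using hxn))

end CommRing

section Field

variable {R K : Type*} [CommRing R] [Nontrivial R] [Field K] [Algebra R K] {x : K}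

theorem ne_zero (hx : Transcendental R x) : x ≠ 0 := by
  rintro rfl
  exact hx isAlgebraic_zero

theorem zpow_injective (hx : Transcendental R x) : Injective (x ^ · : ℤ → K) := by
  intro a b hab
  refine (injective_zpow_iff_not_isOfFinOrder (x := Units.mk0 x hx.ne_zero)).mpr ?_ ?_
  · rw [← Units.isOfFinOrder_val]
    exact hx.not_isOfFinOrder
  · ext
    simpa using hab

theorem one_sub_inv_pow_ne_one_sub_zpow (hx : Transcendental R x) {A : ℕ} (hA : A ≠ 0)
    (e : ℤ) : 1 - (x ^ A)⁻¹ ≠ (1 - x) ^ e := by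
  have hxA : x ^ A ≠ 0 := pow_ne_zero _ hx.ne_zero
  have h1x : 1 - x ≠ 0 := sub_ne_zero.mpr fun h ↦ hx (h ▸ isAlgebraic_one)
  have inj := transcendental_iff_injective.mp hx
  intro h
  -- Clearing denominators gives a polynomial identity whose two sides differ at `X = 0`.
  obtain ⟨B, rfl | rfl⟩ := Int.eq_nat_or_neg e
  · have : (X ^ A * (1 - X) ^ B : R[X]) = X ^ A - 1 := inj <| by
      simp only [map_mul, map_pow, map_sub, map_one, aeval_X]
      rw [zpow_natCast] at h
      rw [← h]
      field_simp
    simpa [zero_pow hA] using congrArg (Polynomial.eval 0) this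
  · have : ((X ^ A - 1) * (1 - X) ^ B : R[X]) = X ^ A := inj <| by
      simp only [map_mul, map_pow, map_sub, map_one, aeval_X]
      rw [zpow_neg, zpow_natCast] at h
      field_simp at h
      linear_combination h
    simpa [zero_pow hA] using congrArg (Polynomial.eval 0) this

theorem one_sub_pow_ne_of_pow_eq_inv {p : ℕ} [ExpChar K p] {y : K} (hx : Transcendental R x)
    {m j : ℕ} (hyx : y ^ p ^ m = (x ^ p ^ j)⁻¹) (m' : ℕ) (e : ℤ) :
    (1 - y) ^ p ^ m' ≠ (1 - x) ^ e := by
  intro h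
  refine hx.one_sub_inv_pow_ne_one_sub_zpow (A := p ^ (j + m'))
    (pow_ne_zero _ (expChar_pos K p).ne') (e * p ^ m) ?_
  calc 1 - (x ^ p ^ (j + m'))⁻¹ = 1 - y ^ p ^ (m + m') := by
        rw [pow_add, pow_mul, pow_add, pow_mul, hyx, inv_pow]
    _ = (1 - y) ^ p ^ (m + m') := by rw [sub_pow_expChar_pow, one_pow]
    _ = (1 - x) ^ (e * p ^ m) := by
        rw [add_comm, pow_add, pow_mul, h, ← zpow_natCast, ← zpow_mul]
        push_cast
        rfl

end Field

end Transcendental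

theorem eq_pow_or_eq_neg_pow_of_pow_eq_zpow {G : Type*} [DivisionMonoid G] {p : ℕ}
    (hp : p.Prime) {x y : G} (hx : Injective (x ^ · : ℤ → G)) {m s : ℕ} {n t : ℤ}
    (hyx : y ^ p ^ m = x ^ n) (hxy : x ^ p ^ s = y ^ t) :
    ∃ j : ℕ, n = (p : ℤ) ^ j ∨ n = -(p : ℤ) ^ j := by
  have key : (p : ℤ) ^ (s + m) = n * t := hx <| by
    simp only [pow_add, zpow_mul, zpow_natCast, ← Nat.cast_pow]
    rw [hxy, ← zpow_natCast, ← zpow_mul, mul_comm, zpow_mul, zpow_natCast, hyx, ← zpow_mul]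
  obtain ⟨j, -, hj⟩ :=
    (dvd_prime_pow (Nat.prime_iff_prime_int.mp hp) _).mp (Dvd.intro t key.symm)
  exact ⟨j, Int.associated_iff.mp hj⟩

theorem pow_pow_eq_of_sub_eq {R : Type*} [CommRing R] [IsReduced R] {p : ℕ} [ExpChar R p]
    {x y : R} {m j a b : ℕ} (h : y ^ p ^ m = x ^ p ^ j) (hab : (a : ℤ) - b = j - m) :
    y ^ p ^ b = x ^ p ^ a := by
  apply iterateFrobenius_inj R p m
  simp only [iterateFrobenius_def, ← pow_mul, ← pow_add]
  rw [add_comm, pow_add, pow_mul, h, ← pow_mul, ← pow_add, show j + b = a + m by omega]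

theorem sub_eq_sub_of_pow_pow_eq {M : Type*} [Monoid M] {p : ℕ} (hp : 2 ≤ p) {x y : M}
    (hx : Injective (x ^ · : ℕ → M)) {a b a' b' : ℕ} (h : y ^ p ^ b = x ^ p ^ a)
    (h' : y ^ p ^ b' = x ^ p ^ a') : (a : ℤ) - b = a' - b' := by
  have : p ^ (a + b') = p ^ (a' + b) := hx <|
    calc x ^ p ^ (a + b') = (y ^ p ^ b) ^ p ^ b' := by rw [h, pow_add, pow_mul]
      _ = (y ^ p ^ b') ^ p ^ b := by rw [← pow_mul, ← pow_mul, mul_comm]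
      _ = x ^ p ^ (a' + b) := by rw [h', pow_add, pow_mul]
  have := Nat.pow_right_injective hp this
  omega

theorem existsUnique_forall_pow_pow_eq {R : Type*} [CommRing R] [IsReduced R] {p : ℕ}
    [ExpChar R p] (hp : 2 ≤ p) {x y : R} (hx : Injective (x ^ · : ℕ → R)) {m j : ℕ}
    (h : y ^ p ^ m = x ^ p ^ j) :
    ∃! n : ℤ, ∀ a b : ℕ, (a : ℤ) - b = n → y ^ p ^ b = x ^ p ^ a := by
  refine ⟨j - m, fun a b hab ↦ pow_pow_eq_of_sub_eq h hab, fun n hn ↦ ?_⟩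
  have := sub_eq_sub_of_pow_pow_eq hp hx (hn n.toNat (-n).toNat (by omega)) h
  omega

theorem exists_pow_eq_zpow_of_setOf_eq {k L : Type*} [Field k] [Semiring L] [Nontrivial L]
    [Algebra k L] {p : ℕ} {x y : k}
    (h : {z : L | ∃ m : ℕ, ∃ n : ℤ, z ^ p ^ m = algebraMap k L (x ^ n)} =
      {z : L | ∃ m : ℕ, ∃ n : ℤ, z ^ p ^ m = algebraMap k L (y ^ n)}) :
    ∃ m : ℕ, ∃ n : ℤ, y ^ p ^ m = x ^ n := by
  have hy : algebraMap k L y ∈ {z : L | ∃ m : ℕ, ∃ n : ℤ, z ^ p ^ m = algebraMap k L (y ^ n)} :=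
    ⟨0, 1, by simp⟩
  obtain ⟨m, n, hmn⟩ := h ▸ hy
  exact ⟨m, n, (algebraMap k L).injective (by rwa [map_pow])⟩

theorem stmt_5_general (p : ℕ) (hp : p.Prime) (k kbar : Type*) [Field k] [CharP k p]
    [Field kbar] [Algebra k kbar]
    (lam1 lam2 : k)
    (htr : Transcendental (⊥ : Subfield k) lam1)
    (h1 : {y : kbar | ∃ m : ℕ, ∃ n : ℤ, y ^ p ^ m = algebraMap k kbar (lam1 ^ n)} =
          {y : kbar | ∃ m : ℕ, ∃ n : ℤ, y ^ p ^ m = algebraMap k kbar (lam2 ^ n)})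
    (h2 : {y : kbar | ∃ m : ℕ, ∃ n : ℤ, y ^ p ^ m = algebraMap k kbar ((1 - lam1) ^ n)} =
          {y : kbar | ∃ m : ℕ, ∃ n : ℤ, y ^ p ^ m = algebraMap k kbar ((1 - lam2) ^ n)}) :
    ∃! n : ℤ, ∀ a b : ℕ, (a : ℤ) - (b : ℤ) = n → lam2 ^ p ^ b = lam1 ^ p ^ a := by
  have : ExpChar k p := ExpChar.prime hp
  obtain ⟨m, n, hmn⟩ := exists_pow_eq_zpow_of_setOf_eq h1
  obtain ⟨s, t, hst⟩ := exists_pow_eq_zpow_of_setOf_eq h1.symm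
  obtain ⟨m', e, he⟩ := exists_pow_eq_zpow_of_setOf_eq h2
  obtain ⟨j, rfl | rfl⟩ := eq_pow_or_eq_neg_pow_of_pow_eq_zpow hp htr.zpow_injective hmn hst
  · rw [← Nat.cast_pow, zpow_natCast] at hmn
    exact existsUnique_forall_pow_pow_eq hp.two_le htr.pow_injective hmn
  · rw [zpow_neg, ← Nat.cast_pow, zpow_natCast] at hmn
    exact absurd he (htr.one_sub_pow_ne_of_pow_eq_inv hmn m' e)

/-- Let `p` be a prime, `k` a field of characteristic `p`, finitely generated as
a field extension of `𝔽_p` (equivalently: generated over its prime field by a finite set), with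
algebraic closure `kbar`, and let `λ₁, λ₂ ∈ k ∖ {0,1}` with `λ₁` transcendental over the prime
field.  If `⟨λ₁⟩^perf = ⟨λ₂⟩^perf` and `⟨1−λ₁⟩^perf = ⟨1−λ₂⟩^perf` in `kbar`, then there is a
unique `n : ℤ` with `λ₂ = λ₁^{pⁿ}`, i.e. `λ₂^{p^b} = λ₁^{p^a}` whenever `a - b = n`. -/
theorem stmt_5 (p : ℕ) (hp : p.Prime) (k kbar : Type*) [Field k] [CharP k p]
    [Field kbar] [Algebra k kbar] [IsAlgClosure k kbar]
    (hfg : ∃ S : Finset k, Subfield.closure (S : Set k) = ⊤)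
    (lam1 lam2 : k) (h10 : lam1 ≠ 0) (h11 : lam1 ≠ 1) (h20 : lam2 ≠ 0) (h21 : lam2 ≠ 1)
    (htr : Transcendental (⊥ : Subfield k) lam1)
    (h1 : {y : kbar | ∃ m : ℕ, ∃ n : ℤ, y ^ p ^ m = algebraMap k kbar (lam1 ^ n)} =
          {y : kbar | ∃ m : ℕ, ∃ n : ℤ, y ^ p ^ m = algebraMap k kbar (lam2 ^ n)})
    (h2 : {y : kbar | ∃ m : ℕ, ∃ n : ℤ, y ^ p ^ m = algebraMap k kbar ((1 - lam1) ^ n)} =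
          {y : kbar | ∃ m : ℕ, ∃ n : ℤ, y ^ p ^ m = algebraMap k kbar ((1 - lam2) ^ n)}) :
    ∃! n : ℤ, ∀ a b : ℕ, (a : ℤ) - (b : ℤ) = n → lam2 ^ p ^ b = lam1 ^ p ^ a :=
  stmt_5_general p hp k kbar lam1 lam2 htr h1 h2
end

section
/- Let λ ∈ ℚ with λ ∉ {0, 1}. Then J(λ) contains an element of 𝓔 if and only if λ ∈ {−1, 2, 1/2}; moreover, in that case J(λ) = {−1, 2, 1/2}. -/
/-- `J(λ) = {λ, 1/λ, 1−λ, 1/(1−λ), λ/(λ−1), (λ−1)/λ}`. -/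
def Jset (k : Type*) [Field k] (lam : k) : Set k :=
  {lam, lam⁻¹, 1 - lam, (1 - lam)⁻¹, lam / (lam - 1), (lam - 1) / lam}

/-- `e ∈ 𝓔` : both `e` and `e⁻¹` are integral over `ℤ`, and `1 - e` divides `2` in the ring of
all algebraic integers (i.e. `2/(1-e)` is integral over `ℤ`). -/
def memE (e : ℂ) : Prop :=
  IsIntegral ℤ e ∧ IsIntegral ℤ e⁻¹ ∧ ∃ c : ℂ, IsIntegral ℤ c ∧ (1 - e) * c = 2

/-! `J(λ)` is the orbit of `λ` under the anharmonic group, generated by `λ ↦ λ⁻¹` and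
`λ ↦ 1 - λ`; so `J(μ) = J(λ)` for every `μ ∈ J(λ)`. A rational `μ ∈ 𝓔` is an integral unit, i.e.
`±1`, and `μ = 1` is excluded since `1 - μ` divides `2`. Hence `J(λ)` meets `𝓔` exactly when
`-1 ∈ J(λ)`, i.e. when `J(λ) = J(-1) = {-1, 2, 1/2}`. -/

section Jset

variable {k : Type*} [Field k] {lam μ : k}

lemma mem_Jset_self : lam ∈ Jset k lam := Set.mem_insert _ _

lemma ne_zero_of_mem_Jset (h0 : lam ≠ 0) (h1 : lam ≠ 1) (hμ : μ ∈ Jset k lam) : μ ≠ 0 := by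
  have h1' : lam - 1 ≠ 0 := sub_ne_zero.mpr h1
  have h1' : 1 - lam ≠ 0 := sub_ne_zero.mpr h1.symm
  rcases hμ with rfl | rfl | rfl | rfl | rfl | rfl <;> simp [*]

lemma Jset_inv (h0 : lam ≠ 0) (h1 : lam ≠ 1) : Jset k lam⁻¹ = Jset k lam := by
  have h1' : 1 - lam ≠ 0 := sub_ne_zero.mpr h1.symm
  have e₁ : lam⁻¹ / (lam⁻¹ - 1) = (1 - lam)⁻¹ := by field_simp
  have e₂ : (lam⁻¹ - 1) / lam⁻¹ = 1 - lam := by field_simp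
  have e₃ : 1 - lam⁻¹ = (lam - 1) / lam := by field_simp
  ext x
  simp only [Jset, inv_inv, inv_div, e₁, e₂, e₃, Set.mem_insert_iff, Set.mem_singleton_iff]
  tauto

lemma Jset_one_sub : Jset k (1 - lam) = Jset k lam := by
  have e₁ : 1 - (1 - lam) = lam := sub_sub_cancel 1 lam
  have e₂ : (1 - lam) / (1 - lam - 1) = (lam - 1) / lam := by
    rw [sub_sub_cancel_left, div_neg, ← neg_div, neg_sub]
  have e₃ : (1 - lam - 1) / (1 - lam) = lam / (lam - 1) := by
    rw [sub_sub_cancel_left, ← neg_sub, neg_div_neg_eq]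
  ext x
  simp only [Jset, e₁, e₂, e₃, Set.mem_insert_iff, Set.mem_singleton_iff]
  tauto

lemma Jset_eq_of_mem (h0 : lam ≠ 0) (h1 : lam ≠ 1) (hμ : μ ∈ Jset k lam) :
    Jset k μ = Jset k lam := by
  have h1' : 1 - lam ≠ 0 := sub_ne_zero.mpr h1.symm
  have hsub : 1 - lam ≠ 1 := by simpa using h0
  rcases hμ with rfl | rfl | rfl | rfl | rfl | rfl
  · rfl
  · exact Jset_inv h0 h1
  · exact Jset_one_sub
  · rw [Jset_inv h1' hsub, Jset_one_sub]
  · have e : lam / (lam - 1) = 1 - (1 - lam)⁻¹ := by field_simp; ring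
    rw [e, Jset_one_sub, Jset_inv h1' hsub, Jset_one_sub]
  · have e : (lam - 1) / lam = 1 - lam⁻¹ := by field_simp
    rw [e, Jset_one_sub, Jset_inv h0 h1]

lemma Jset_neg_one : Jset k (-1) = {-1, 2, 1 / 2} := by
  ext x
  simp only [Jset, Set.mem_insert_iff, Set.mem_singleton_iff]
  norm_num
  tauto

lemma Jset_eq_of_mem_neg_one_orbit (h2 : (2 : k) ≠ 0) (h : lam ∈ ({-1, 2, 1 / 2} : Set k)) :
    Jset k lam = {-1, 2, 1 / 2} := by
  rw [← Jset_neg_one] at h ⊢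
  exact Jset_eq_of_mem (neg_ne_zero.mpr one_ne_zero) (fun h' => h2 (by linear_combination -h')) h

end Jset

lemma eq_one_or_neg_one_of_isIntegral_ratCast {q : ℚ} (h0 : q ≠ 0) (hq : IsIntegral ℤ (q : ℂ))
    (hq' : IsIntegral ℤ (q : ℂ)⁻¹) : q = 1 ∨ q = -1 := by
  rw [← Rat.cast_inv] at hq'
  rw [← eq_ratCast (algebraMap ℚ ℂ),
    isIntegral_algebraMap_iff (algebraMap ℚ ℂ).injective] at hq hq'
  obtain ⟨n, hn⟩ := IsIntegrallyClosed.isIntegral_iff.mp hq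
  obtain ⟨m, hm⟩ := IsIntegrallyClosed.isIntegral_iff.mp hq'
  simp only [eq_intCast] at hn hm
  have hnm : n * m = 1 := by
    exact_mod_cast (show (n : ℚ) * m = 1 by rw [hn, hm, mul_inv_cancel₀ h0])
  rcases Int.eq_one_or_neg_one_of_mul_eq_one hnm with rfl | rfl <;> simp [← hn]

lemma memE_ratCast_iff {q : ℚ} (hq : q ≠ 0) : memE q ↔ q = -1 := by
  constructor
  · rintro ⟨hi, hi', c, -, hc⟩
    refine (eq_one_or_neg_one_of_isIntegral_ratCast hq hi hi').resolve_left ?_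
    rintro rfl
    norm_num at hc
  · rintro rfl
    have hneg : IsIntegral ℤ (-1 : ℂ) := isIntegral_one.neg
    exact ⟨by simpa using hneg, by simpa using hneg, 1, isIntegral_one, by norm_num⟩

/-- For `λ ∈ ℚ ∖ {0,1}`, `J(λ)` meets `𝓔` iff `λ ∈ {−1, 2, 1/2}`, and in that
case `J(λ) = {−1, 2, 1/2}`. -/
theorem stmt_7 (lam : ℚ) (h0 : lam ≠ 0) (h1 : lam ≠ 1) :
    ((∃ μ ∈ Jset ℚ lam, memE (μ : ℂ)) ↔ lam ∈ ({-1, 2, 1/2} : Set ℚ)) ∧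
    (lam ∈ ({-1, 2, 1/2} : Set ℚ) → Jset ℚ lam = {-1, 2, 1/2}) := by
  have hJ : lam ∈ ({-1, 2, 1/2} : Set ℚ) → Jset ℚ lam = {-1, 2, 1/2} :=
    Jset_eq_of_mem_neg_one_orbit two_ne_zero
  refine ⟨⟨?_, fun h => ⟨-1, by simp [hJ h], (memE_ratCast_iff (by norm_num)).mpr rfl⟩⟩, hJ⟩
  rintro ⟨μ, hμ, hE⟩
  obtain rfl := (memE_ratCast_iff (ne_zero_of_mem_Jset h0 h1 hμ)).mp hE
  rw [← Jset_neg_one, Jset_eq_of_mem h0 h1 hμ]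
  exact mem_Jset_self
end

section
/- Let λ be a complex number with λ ∉ {0, 1}, and suppose that (1 − λ)(1 + λⁿ) = 2 for some integer n. Then λ belongs to 𝓔; that is, λ and λ⁻¹ are integral over ℤ and 2/(1 − λ) is integral over ℤ. -/
/-!
For `n = k + 1 > 0` the relation reads `λ^(k+2) - λ^(k+1) + (λ + 1) = 0`, and for `n = -(m + 1) < 0`
it says that `μ = λ⁻¹` satisfies `μ^(m+2) - μ^(m+1) - (μ + 1) = 0` (`n = 0` forces `λ = 0`).
A root `x` of `X^(k+2) - X^(k+1) + ε (X + 1)` with `ε = ±1` is integral, and the constant term `ε`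
makes it a unit of `ℤ[x]`. Hence `λ^{±1}` are integral, and so is `2 / (1 - λ) = 1 + λⁿ`.
-/

open Polynomial in
theorem isIntegral_of_pow_sub_pow_add_mul_eq_zero {A : Type*} [CommRing A] {x : A} {k : ℕ}
    (ε : ℤ) (hx : x ^ (k + 2) - x ^ (k + 1) + ε * (x + 1) = 0) : IsIntegral ℤ x := by
  refine ⟨X ^ (k + 2) - X ^ (k + 1) + C ε * (X + 1), ?_, ?_⟩
  · monicity!
    omega
  · simp only [eval₂_add, eval₂_sub, eval₂_mul, eval₂_pow, eval₂_X, eval₂_C, eval₂_one]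
    simp only [eq_intCast]
    linear_combination hx

theorem isIntegral_and_isIntegral_inv_of_pow_sub_pow_add_mul_eq_zero {K : Type*} [Field K]
    {x : K} {k : ℕ} (ε : ℤˣ) (hx : x ^ (k + 2) - x ^ (k + 1) + (ε : ℤ) * (x + 1) = 0) :
    IsIntegral ℤ x ∧ IsIntegral ℤ x⁻¹ := by
  have hint := isIntegral_of_pow_sub_pow_add_mul_eq_zero _ hx
  have hε : ((ε : ℤ) : K) * ε = 1 := by
    rw [← Int.cast_mul, ← Units.val_mul, Int.units_mul_self, Units.val_one, Int.cast_one]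
  have hinv : x⁻¹ = -ε * (x ^ (k + 1) - x ^ k + ε) :=
    inv_eq_of_mul_eq_one_right (by linear_combination (-(ε : ℤ) : K) * hx + hε)
  have hεint : IsIntegral ℤ ((ε : ℤ) : K) := isIntegral_algebraMap (x := (ε : ℤ))
  exact ⟨hint, hinv ▸ hεint.neg.mul (((hint.pow _).sub (hint.pow _)).add hεint)⟩

theorem IsIntegral.zpow {R A : Type*} [CommRing R] [DivisionRing A] [Algebra R A] {x : A}
    (hx : IsIntegral R x) (hx' : IsIntegral R x⁻¹) (n : ℤ) : IsIntegral R (x ^ n) := by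
  cases n with
  | ofNat k => simpa using hx.pow k
  | negSucc k => simpa [zpow_negSucc, inv_pow] using hx'.pow (k + 1)

theorem stmt_12_general (lam : ℂ) (h0 : lam ≠ 0)
    (h : ∃ n : ℤ, (1 - lam) * (1 + lam ^ n) = 2) :
    IsIntegral ℤ lam ∧ IsIntegral ℤ lam⁻¹ ∧ ∃ c : ℂ, IsIntegral ℤ c ∧ (1 - lam) * c = 2 := by
  obtain ⟨n, hn⟩ := h
  have hunit : IsIntegral ℤ lam ∧ IsIntegral ℤ lam⁻¹ := by
    cases n with
    | ofNat k =>
      rw [Int.ofNat_eq_natCast, zpow_natCast] at hn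
      cases k with
      | zero => exact absurd (by linear_combination -hn / 2) h0
      | succ k =>
        exact isIntegral_and_isIntegral_inv_of_pow_sub_pow_add_mul_eq_zero (k := k) 1
          (by push_cast; linear_combination -hn)
    | negSucc m =>
      rw [zpow_negSucc, ← inv_pow] at hn
      have hμ := isIntegral_and_isIntegral_inv_of_pow_sub_pow_add_mul_eq_zero (x := lam⁻¹) (k := m)
        (-1) (by
          push_cast
          linear_combination lam⁻¹ * hn + (1 + lam⁻¹ ^ (m + 1)) * mul_inv_cancel₀ h0)
      rw [inv_inv] at hμ
      exact hμ.symm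
  exact ⟨hunit.1, hunit.2, 1 + lam ^ n, isIntegral_one.add (hunit.1.zpow hunit.2 n), hn⟩

/-- If `λ ∈ ℂ ∖ {0,1}` satisfies `(1 − λ)(1 + λⁿ) = 2` for some `n : ℤ`, then
`λ ∈ 𝓔`: both `λ` and `λ⁻¹` are integral over `ℤ`, and `2/(1 − λ)` is integral over `ℤ`
(i.e. `1 − λ` divides `2` in the ring of all algebraic integers). -/
theorem stmt_12 (lam : ℂ) (h0 : lam ≠ 0) (h1 : lam ≠ 1)
    (h : ∃ n : ℤ, (1 - lam) * (1 + lam ^ n) = 2) :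
    IsIntegral ℤ lam ∧ IsIntegral ℤ lam⁻¹ ∧ ∃ c : ℂ, IsIntegral ℤ c ∧ (1 - lam) * c = 2 :=
  stmt_12_general lam h0 h
end

section
/- Let A be a finitely generated abelian group, B a subgroup of A, and a ∈ A. If for every prime number ℓ and every natural number n there exist b ∈ B and c ∈ A with a = b + ℓⁿ · c, then a ∈ B. -/
/-!
Passing to `A ⧸ B`, the image of `a` is divisible by every prime power, so it suffices that in a
finitely generated abelian group `ℤʳ × ⨁ ZMod (pᵢ ^ eᵢ)` only `0` is. On the free part an integer
divisible by all powers of `2` vanishes, and the `i`-th torsion coordinate is a multiple of `pᵢ ^ eᵢ`.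
-/

theorem Int.eq_zero_of_forall_two_pow_dvd {z : ℤ} (h : ∀ n : ℕ, (2 : ℤ) ^ n ∣ z) : z = 0 :=
  Int.eq_zero_of_dvd_of_natAbs_lt_natAbs (h z.natAbs) (by simpa using Nat.lt_two_pow_self)

theorem Finsupp.eq_zero_of_forall_two_pow_nsmul {ι : Type*} {x : ι →₀ ℤ}
    (hx : ∀ n : ℕ, ∃ y, x = (2 ^ n) • y) : x = 0 := by
  ext j
  refine Int.eq_zero_of_forall_two_pow_dvd fun n => ?_
  obtain ⟨y, rfl⟩ := hx n
  exact ⟨y j, by simp⟩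

theorem DirectSum.eq_zero_of_forall_nsmul_zmod {ι : Type*} {m : ι → ℕ}
    {x : DirectSum ι fun i => ZMod (m i)} (hx : ∀ i, ∃ y, x = m i • y) : x = 0 := by
  ext i
  obtain ⟨y, rfl⟩ := hx i
  rw [DirectSum.smul_apply, nsmul_eq_mul, ZMod.natCast_self, zero_mul, DirectSum.zero_apply]

theorem AddCommGroup.eq_zero_of_forall_prime_pow_nsmul {G : Type*} [AddCommGroup G]
    [AddGroup.FG G] {x : G} (hx : ∀ ℓ n : ℕ, ℓ.Prime → ∃ y, x = (ℓ ^ n) • y) : x = 0 := by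
  obtain ⟨r, ι, _, p, hp, e, ⟨f⟩⟩ := AddCommGroup.equiv_free_prod_directSum_zmod G
  have hfx : ∀ ℓ n : ℕ, ℓ.Prime → ∃ y, f x = (ℓ ^ n) • y := fun ℓ n hℓ => by
    obtain ⟨y, rfl⟩ := hx ℓ n hℓ
    exact ⟨f y, map_nsmul f _ y⟩
  suffices f x = 0 from f.map_eq_zero_iff.mp this
  refine Prod.ext (Finsupp.eq_zero_of_forall_two_pow_nsmul fun n => ?_)
    (DirectSum.eq_zero_of_forall_nsmul_zmod fun i => ?_)
  · obtain ⟨y, hy⟩ := hfx 2 n Nat.prime_two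
    exact ⟨y.1, by rw [hy, Prod.smul_fst]⟩
  · obtain ⟨y, hy⟩ := hfx (p i) (e i) (hp i)
    exact ⟨y.2, by rw [hy, Prod.smul_snd]⟩

/-- Let `A` be a finitely generated abelian group, `B ≤ A` and `a ∈ A`.  If for
every prime `ℓ` and every `n : ℕ` one can write `a = b + ℓⁿ • c` with `b ∈ B`, `c ∈ A`, then
`a ∈ B`. -/
theorem stmt_13 (A : Type*) [AddCommGroup A] (hA : AddGroup.FG A)
    (B : AddSubgroup A) (a : A)
    (h : ∀ ℓ n : ℕ, ℓ.Prime → ∃ b ∈ B, ∃ c : A, a = b + (ℓ ^ n) • c) :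
    a ∈ B := by
  rw [← QuotientAddGroup.eq_zero_iff]
  refine AddCommGroup.eq_zero_of_forall_prime_pow_nsmul fun ℓ n hℓ => ?_
  obtain ⟨b, hb, c, rfl⟩ := h ℓ n hℓ
  refine ⟨c, ?_⟩
  rw [QuotientAddGroup.mk_add, (QuotientAddGroup.eq_zero_iff b).mpr hb, zero_add,
    QuotientAddGroup.mk_nsmul]
end

section
/- Let p be a prime number, A a finitely generated abelian group, B a subgroup of A, and a ∈ A. If for every prime number ℓ ≠ p and every natural number n there exist b ∈ B and c ∈ A with a = b + ℓⁿ · c, then there exists a natural number m such that p^m · a ∈ B. -/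
/-!
Pass to `A ⧸ B`: the image of `a` is divisible by every power of every prime `ℓ ≠ p`, and it
suffices to show that it is killed by a power of `p`. By the structure theorem the quotient is
`ℤⁿ × ⨁ ZMod (qᵢ ^ eᵢ)`, and divisibility passes to each coordinate. An integer divisible by all
powers of one prime `ℓ ≠ p` is zero; a coordinate in `ZMod (qᵢ ^ eᵢ)` with `qᵢ ≠ p` is `qᵢ ^ eᵢ`
times something, hence zero; the remaining coordinates are killed by `p ^ ∑ eᵢ`.
-/

def IsDivisibleAwayFrom {M : Type*} [AddCommGroup M] (p : ℕ) (x : M) : Prop :=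
  ∀ ℓ n : ℕ, ℓ.Prime → ℓ ≠ p → ∃ c : M, x = ℓ ^ n • c

namespace IsDivisibleAwayFrom

variable {M N : Type*} [AddCommGroup M] [AddCommGroup N] {p : ℕ}

theorem map {x : M} (hx : IsDivisibleAwayFrom p x) (φ : M →+ N) :
    IsDivisibleAwayFrom p (φ x) := fun ℓ n hℓ hℓp ↦ by
  obtain ⟨c, rfl⟩ := hx ℓ n hℓ hℓp
  exact ⟨φ c, map_nsmul φ _ c⟩

theorem int_eq_zero {x : ℤ} (hx : IsDivisibleAwayFrom p x) : x = 0 := by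
  obtain ⟨ℓ, hpℓ, hℓ⟩ := Nat.exists_infinite_primes (p + 1)
  by_contra hx0
  obtain ⟨n, hn⟩ := (Int.finiteMultiplicity_iff (a := ℓ)).mpr ⟨by simpa using hℓ.ne_one, hx0⟩
  obtain ⟨c, rfl⟩ := hx ℓ (n + 1) hℓ (by omega)
  exact hn ⟨c, by simp⟩

theorem zmod_eq_zero {q e : ℕ} (hq : q.Prime) (hqp : q ≠ p) {x : ZMod (q ^ e)}
    (hx : IsDivisibleAwayFrom p x) : x = 0 := by
  obtain ⟨c, rfl⟩ := hx q e hq hqp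
  exact ZModModule.char_nsmul_eq_zero _ c

theorem exists_pow_nsmul_eq_zero [AddGroup.FG M] {x : M} (hx : IsDivisibleAwayFrom p x) :
    ∃ m : ℕ, p ^ m • x = 0 := by
  obtain ⟨n, ι, _, q, hq, e, ⟨f⟩⟩ := AddCommGroup.equiv_free_prod_directSum_zmod M
  have hfree : (f x).1 = 0 := Finsupp.ext fun j ↦
    (hx.map ((Finsupp.applyAddHom j).comp
      ((AddMonoidHom.fst _ _).comp f.toAddMonoidHom))).int_eq_zero
  refine ⟨∑ i, e i, f.injective ?_⟩
  rw [map_nsmul, map_zero]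
  refine Prod.ext (by simp [hfree]) (DFinsupp.ext fun i ↦ ?_)
  show (p ^ ∑ i, e i) • (f x).2 i = 0
  by_cases hqi : q i = p
  · obtain ⟨k, hk⟩ : q i ^ e i ∣ p ^ ∑ j, e j :=
      hqi ▸ pow_dvd_pow _ (Finset.single_le_sum (fun j _ ↦ Nat.zero_le (e j)) (Finset.mem_univ i))
    rw [hk, mul_comm, mul_nsmul, ZModModule.char_nsmul_eq_zero]
  · have hzero : (f x).2 i = 0 := (hx.map ((DFinsupp.evalAddMonoidHom i).comp
      ((AddMonoidHom.snd _ _).comp f.toAddMonoidHom))).zmod_eq_zero (hq i) hqi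
    rw [hzero, nsmul_zero]

end IsDivisibleAwayFrom

theorem stmt_14_general (p : ℕ) (A : Type*) [AddCommGroup A] (hA : AddGroup.FG A)
    (B : AddSubgroup A) (a : A)
    (h : ∀ ℓ n : ℕ, ℓ.Prime → ℓ ≠ p → ∃ b ∈ B, ∃ c : A, a = b + (ℓ ^ n) • c) :
    ∃ m : ℕ, (p ^ m) • a ∈ B := by
  have hdiv : IsDivisibleAwayFrom p (a : A ⧸ B) := fun ℓ n hℓ hℓp ↦ by
    obtain ⟨b, hb, c, rfl⟩ := h ℓ n hℓ hℓp
    exact ⟨c, by simp [(QuotientAddGroup.eq_zero_iff b).mpr hb]⟩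
  obtain ⟨m, hm⟩ := hdiv.exists_pow_nsmul_eq_zero
  exact ⟨m, (QuotientAddGroup.eq_zero_iff _).mp (by simpa using hm)⟩

/-- Let `p` be a prime, `A` a finitely generated abelian group, `B ≤ A` and
`a ∈ A`.  If for every prime `ℓ ≠ p` and every `n : ℕ` one can write `a = b + ℓⁿ • c` with
`b ∈ B`, `c ∈ A`, then `p^m • a ∈ B` for some `m : ℕ`. -/
theorem stmt_14 (p : ℕ) (hp : p.Prime) (A : Type*) [AddCommGroup A] (hA : AddGroup.FG A)
    (B : AddSubgroup A) (a : A)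
    (h : ∀ ℓ n : ℕ, ℓ.Prime → ℓ ≠ p → ∃ b ∈ B, ∃ c : A, a = b + (ℓ ^ n) • c) :
    ∃ m : ℕ, (p ^ m) • a ∈ B :=
  stmt_14_general p A hA B a h
end
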